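/- Let g be a symmetric invertible 4×4 real matrix with inverse g^{-1} (entries g^{αβ}), and let h : Fin 4 → Fin 4 → Fin 4 → ℝ be symmetric in its last two indices (h^α_{βγ} = h^α_{γβ}) and satisfy, for all α, β, γ: Σ_λ (g_{αλ} h^λ_{γβ} + g_{βλ} h^λ_{γα}) - (2/3) g_{αβ} Σ_λ h^λ_{γλ} = 0. Then h = 0. -/

import Mathlib

/-!
For fixed `γ` let `M_γ` be the matrix `(λ, β) ↦ h^λ_{γβ}` and `S_γ := g M_γ`.
The hypothesis says `S_γ + S_γᵀ = (2/3) tr(M_γ) g`. Multiplying by `g⁻¹` and taking traces gives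
`2 tr M_γ = (2/3) · 4 · tr M_γ`, so `tr M_γ = 0` and `S_{αγβ}` is antisymmetric in `α, β`.
Since it is also symmetric in `γ, β`, it vanishes, and `M_γ = g⁻¹ S_γ = 0`.
-/

open Matrix

theorem eq_zero_of_symm_of_antisymm {ι G : Type*} [AddCommGroup G] [IsAddTorsionFree G]
    {S : ι → ι → ι → G} (hsymm : ∀ a c b, S a c b = S a b c)
    (hanti : ∀ a c b, S a c b = -S b c a) (a c b : ι) : S a c b = 0 := by
  refine self_eq_neg.mp ?_
  calc S a c b = -S b c a := hanti a c b
    _ = -S b a c := by rw [hsymm b c a]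
    _ = S c a b := by rw [hanti b a c, neg_neg]
    _ = S c b a := hsymm c a b
    _ = -S a b c := hanti c b a
    _ = -S a c b := by rw [hsymm a b c]

theorem Matrix.trace_eq_zero_of_mul_add_transpose_eq_smul {n K : Type*} [Fintype n]
    [DecidableEq n] [Field K] {g M : Matrix n n K} (hg : g.IsSymm) (hdet : IsUnit g.det) {c : K}
    (hc : c * Fintype.card n ≠ 2) (hM : g * M + (g * M)ᵀ = (c * M.trace) • g) :
    M.trace = 0 := by
  have htrace : (g⁻¹ * (g * M + (g * M)ᵀ)).trace = (g⁻¹ * ((c * M.trace) • g)).trace :=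
    congrArg (fun X => (g⁻¹ * X).trace) hM
  have htranspose : (g⁻¹ * (g * M)ᵀ).trace = M.trace := by
    rw [transpose_mul, hg.eq, ← Matrix.mul_assoc, trace_mul_comm, ← Matrix.mul_assoc,
      mul_nonsing_inv g hdet, Matrix.one_mul, trace_transpose]
  rw [Matrix.mul_add, trace_add, nonsing_inv_mul_cancel_left g M hdet, htranspose,
    Matrix.mul_smul, nonsing_inv_mul g hdet, trace_smul, trace_one, smul_eq_mul] at htrace
  have hfactor : (2 - c * Fintype.card n) * M.trace = 0 := by linear_combination htrace
  exact (mul_eq_zero.mp hfactor).resolve_left (sub_ne_zero.mpr hc.symm)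

theorem stmt_3 (g : Matrix (Fin 4) (Fin 4) ℝ) (hg : g.IsSymm) (hdet : IsUnit g.det)
    (h : Fin 4 → Fin 4 → Fin 4 → ℝ)
    (hsym : ∀ α β γ, h α β γ = h α γ β)
    (heq : ∀ α β γ, (∑ l, (g α l * h l γ β + g β l * h l γ α))
      - (2/3) * g α β * (∑ l, h l γ l) = 0) :
    ∀ α β γ, h α β γ = 0 := by
  set M : Fin 4 → Matrix (Fin 4) (Fin 4) ℝ := fun γ => Matrix.of fun l β => h l γ β
  have hM : ∀ γ, g * M γ + (g * M γ)ᵀ = ((2/3) * (M γ).trace) • g := by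
    intro γ
    ext α β
    simp only [M, Matrix.add_apply, transpose_apply, Matrix.smul_apply, mul_apply, of_apply,
      trace, diag_apply, smul_eq_mul]
    rw [← Finset.sum_add_distrib]
    linear_combination heq α β γ
  have htrace (γ) : (M γ).trace = 0 :=
    trace_eq_zero_of_mul_add_transpose_eq_smul hg hdet (by norm_num) (hM γ)
  have hlower : ∀ α γ β, (g * M γ) α β = 0 := by
    refine eq_zero_of_symm_of_antisymm (fun α γ β => ?_) (fun α γ β => ?_)
    · simp only [M, mul_apply, of_apply, hsym]
    · have hαβ := congrFun (congrFun (hM γ) α) β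
      simp only [htrace, mul_zero, zero_smul, Matrix.add_apply, transpose_apply,
        Matrix.zero_apply] at hαβ
      exact eq_neg_of_add_eq_zero_left hαβ
  intro α β γ
  have hMβ : M β = 0 := by
    have hgM : g * M β = 0 := Matrix.ext fun α γ => hlower α β γ
    rw [← nonsing_inv_mul_cancel_left g (M β) hdet, hgM, Matrix.mul_zero]
  simpa [M] using congrFun (congrFun hMβ α) γ
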